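/- arXiv:1703.00505 — 7 statements merged into one kernel-verified Lean document; each statement's English description precedes it below -/
import Mathlib

section
/- Let c ≥ 0 be a real number and q a positive integer. Suppose (e_n)_{n≥q} is a sequence of real numbers satisfying e_n ≤ c + (1/n) · Σ_{u=q}^{n-1} e_u for all n ≥ q (where the empty sum for n = q is 0). Then e_n ≤ c · log(e·n/q) for all n ≥ q. -/
/-!
Writing `S n = ∑_{q ≤ u < n} e u`, the hypothesis gives `S (n+1) ≤ (1 + 1/n) S n + c`, and
induction yields `S n ≤ c n log (n/q)`: the step closes because `(n+1) log ((n+1)/n) ≥ 1`.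
Feeding this bound back into the hypothesis gives `e n ≤ c + c log (n/q) = c log (e n/q)`.
-/

open Finset Real

lemma one_le_add_one_mul_log_add_one_div {x : ℝ} (hx : 0 < x) :
    1 ≤ (x + 1) * log ((x + 1) / x) := by
  have h := one_sub_inv_le_log_of_pos (x := (x + 1) / x) (by positivity)
  have h₁ : 1 - ((x + 1) / x)⁻¹ = 1 / (x + 1) := by field_simp; ring
  rw [h₁, div_le_iff₀ (by positivity)] at h
  linarith

lemma sum_Ico_le_mul_log_of_le_add_avg {c : ℝ} (hc : 0 ≤ c) {q : ℕ} (hq : 0 < q) {e : ℕ → ℝ}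
    (hrec : ∀ n, q ≤ n → e n ≤ c + (1 / n) * ∑ u ∈ Ico q n, e u) {n : ℕ} (hn : q ≤ n) :
    ∑ u ∈ Ico q n, e u ≤ c * n * log (n / q) := by
  induction n, hn using Nat.le_induction with
  | base => simp [div_self (Nat.cast_ne_zero.mpr hq.ne' : (q : ℝ) ≠ 0)]
  | succ n hn ih =>
    have hn₀ : (0 : ℝ) < n := by exact_mod_cast hq.trans_le hn
    have hq₀ : (0 : ℝ) < q := by exact_mod_cast hq
    have hlog : log ((n + 1) / q) = log (n / q) + log ((n + 1) / n) := by
      rw [← log_mul (by positivity) (by positivity)]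
      congr 1
      field_simp
    have hstep := one_le_add_one_mul_log_add_one_div hn₀
    set S := ∑ u ∈ Ico q n, e u
    have hen : e n ≤ c + S / n := by simpa [div_eq_inv_mul] using hrec n hn
    rw [sum_Ico_succ_top hn, Nat.cast_succ, hlog]
    calc S + e n ≤ (n + 1) / n * S + c := by
          have : (n + 1) / n * S = S + S / n := by field_simp
          linarith
      _ ≤ (n + 1) / n * (c * n * log (n / q)) + c * ((n + 1) * log ((n + 1) / n)) := by
          gcongr
          exact le_mul_of_one_le_right hc hstep
      _ = c * (n + 1) * (log (n / q) + log ((n + 1) / n)) := by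
          field_simp

theorem stmt_0 (c : ℝ) (hc : 0 ≤ c) (q : ℕ) (hq : 0 < q) (e : ℕ → ℝ)
    (hrec : ∀ n, q ≤ n → e n ≤ c + (1 / n) * ∑ u ∈ Finset.Ico q n, e u) :
    ∀ n, q ≤ n → e n ≤ c * Real.log (Real.exp 1 * n / q) := by
  intro n hn
  have hn₀ : (0 : ℝ) < n := by exact_mod_cast hq.trans_le hn
  have hq₀ : (0 : ℝ) < q := by exact_mod_cast hq
  have hsum := sum_Ico_le_mul_log_of_le_add_avg hc hq hrec hn
  have havg : (1 / (n : ℝ)) * ∑ u ∈ Ico q n, e u ≤ c * log (n / q) :=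
    calc (1 / (n : ℝ)) * ∑ u ∈ Ico q n, e u ≤ (1 / n) * (c * n * log (n / q)) := by gcongr
      _ = c * log (n / q) := by field_simp
  have hlog : log (exp 1 * n / q) = 1 + log (n / q) := by
    rw [mul_div_assoc, log_mul (exp_ne_zero 1) (by positivity), log_exp]
  rw [hlog]
  linarith [hrec n hn]
end

section
/- Let c ≥ 0 and let (f_p)_{p≥1} be a sequence of nonnegative reals with f_1 = 0 and f_p ≤ c + (1/(p(p−1))) · Σ_{k=1}^{p−1} k·f_k for all p ≥ 2. Then f_p ≤ 2c for all p ≥ 1. -/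
open Finset

lemma sum_Icc_one_natCast (n : ℕ) : ∑ k ∈ Icc 1 n, (k : ℝ) = n * (n + 1) / 2 := by
  induction n with
  | zero => simp
  | succ n ih =>
    rw [sum_Icc_succ_top (by omega), ih]
    push_cast
    ring

lemma sum_Icc_one_natCast_mul_le {f : ℕ → ℝ} {M : ℝ} (n : ℕ) (hf : ∀ k ∈ Icc 1 n, f k ≤ M) :
    ∑ k ∈ Icc 1 n, (k : ℝ) * f k ≤ n * (n + 1) / 2 * M :=
  calc ∑ k ∈ Icc 1 n, (k : ℝ) * f k
      ≤ ∑ k ∈ Icc 1 n, (k : ℝ) * M :=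
        sum_le_sum fun k hk => mul_le_mul_of_nonneg_left (hf k hk) k.cast_nonneg
    _ = n * (n + 1) / 2 * M := by rw [← sum_mul, sum_Icc_one_natCast]

lemma weighted_average_le_half {f : ℕ → ℝ} {M : ℝ} {p : ℕ} (hp : 2 ≤ p)
    (hf : ∀ k ∈ Icc 1 (p - 1), f k ≤ M) :
    1 / ((p : ℝ) * ((p : ℝ) - 1)) * ∑ k ∈ Icc 1 (p - 1), (k : ℝ) * f k ≤ M / 2 := by
  have hpos : 0 < (p : ℝ) * ((p : ℝ) - 1) := by
    have : (2 : ℝ) ≤ p := by exact_mod_cast hp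
    nlinarith
  have hsum := sum_Icc_one_natCast_mul_le (p - 1) hf
  rw [Nat.cast_sub (by omega : 1 ≤ p), Nat.cast_one, sub_add_cancel] at hsum
  rw [one_div_mul_eq_div, div_le_iff₀ hpos]
  linarith

theorem stmt_4_general (c : ℝ) (hc : 0 ≤ c) (f : ℕ → ℝ)
    (h1 : f 1 = 0)
    (hrec : ∀ p : ℕ, 2 ≤ p →
      f p ≤ c + (1 / ((p : ℝ) * ((p : ℝ) - 1))) * ∑ k ∈ Finset.Icc 1 (p - 1), (k : ℝ) * f k) :
    ∀ p, 1 ≤ p → f p ≤ 2 * c := by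
  intro p
  induction p using Nat.strong_induction_on with
  | _ p ih =>
    intro hp
    rcases hp.eq_or_lt with rfl | hp
    · linarith
    · have havg := weighted_average_le_half hp fun k hk =>
        ih k (by grind) (mem_Icc.mp hk).1
      linarith [hrec p hp]

theorem stmt_4 (c : ℝ) (hc : 0 ≤ c) (f : ℕ → ℝ)
    (hnonneg : ∀ p, 1 ≤ p → 0 ≤ f p) (h1 : f 1 = 0)
    (hrec : ∀ p : ℕ, 2 ≤ p →
      f p ≤ c + (1 / ((p : ℝ) * ((p : ℝ) - 1))) * ∑ k ∈ Finset.Icc 1 (p - 1), (k : ℝ) * f k) :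
    ∀ p, 1 ≤ p → f p ≤ 2 * c :=
  stmt_4_general c hc f h1 hrec
end

section
/- For integers n ≥ m ≥ 3, one has (n−m+3)·(h_n − h_{n−m+1}) ≤ m, where h_k = Σ_{j=1}^{k} 1/j is the k-th harmonic number. -/
/-- h_k is the k-th harmonic number. -/
noncomputable def harm (k : ℕ) : ℝ := ∑ j ∈ Finset.Icc 1 k, (1 : ℝ) / j

theorem harm_succ (k : ℕ) : harm (k + 1) = harm k + 1 / (k + 1) := by
  rw [harm, harm, Finset.sum_Icc_succ_top (by omega), Nat.cast_succ]

/-- The first term of `h_{a+1+k} - h_a` contributes at most `2` after scaling by `a + 2`,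
each of the remaining `k` terms at most `1`. -/
theorem add_two_mul_harm_sub_harm_le (a k : ℕ) :
    ((a : ℝ) + 2) * (harm (a + 1 + k) - harm a) ≤ 2 + k := by
  have ha : (0 : ℝ) ≤ a := a.cast_nonneg
  induction k with
  | zero =>
    rw [add_zero, harm_succ, add_sub_cancel_left, mul_one_div, div_le_iff₀ (by positivity)]
    push_cast
    linarith
  | succ k ih =>
    have hterm : ((a : ℝ) + 2) * (1 / ((a + 1 + k : ℕ) + 1)) ≤ 1 := by
      rw [mul_one_div, div_le_one (by positivity)]
      push_cast
      linarith [(k.cast_nonneg : (0 : ℝ) ≤ k)]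
    rw [← add_assoc, harm_succ, add_sub_right_comm, mul_add]
    push_cast at ih hterm ⊢
    linarith

theorem stmt_6 (n m : ℕ) (hm : 3 ≤ m) (hnm : m ≤ n) :
    ((n : ℝ) - m + 3) * (harm n - harm (n - m + 1)) ≤ m := by
  obtain ⟨k, rfl⟩ : ∃ k, m = k + 2 := ⟨m - 2, by omega⟩
  obtain ⟨a, rfl⟩ : ∃ a, n = a + 1 + k := ⟨n - k - 1, by omega⟩
  rw [show a + 1 + k - (k + 2) + 1 = a by omega]
  convert add_two_mul_harm_sub_harm_le a k using 2 <;> push_cast <;> ring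
end

section
/- For integers n ≥ m ≥ 1, the quantity E[C_{n,m}] := 2·[n + 3 + (n+1)·h_n − (m+2)·h_m − (n−m+3)·h_{n−m+1}] satisfies E[C_{n,m}] ≤ 4n. -/
/-!
Put `k = n - m + 1`, so that `m + k = n + 1` and `(n + 1) h_n = m h_n + k h_n`. Then
`E[C_{n,m}] / 2 = n + 3 + m (h_n - h_m) + k (h_n - h_k) - 2 h_m - 2 h_k`.
Each tail `h_n - h_m` has `n - m` terms, all at most `1 / m`, so `m (h_n - h_m) ≤ n - m`, and
likewise `k (h_n - h_k) ≤ n - k`; with `h_m, h_k ≥ 1` this gives `E[C_{n,m}] ≤ 4n - 4`.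
-/

lemma harm_eq_sum_Ioc (k : ℕ) : harm k = ∑ j ∈ Finset.Ioc 0 k, (1 : ℝ) / j := by
  rw [harm, ← Finset.Icc_add_one_left_eq_Ioc, zero_add]

lemma one_le_harm {k : ℕ} (hk : 1 ≤ k) : 1 ≤ harm k := by
  have hmem : 1 ∈ Finset.Icc 1 k := Finset.mem_Icc.2 ⟨le_rfl, hk⟩
  simpa [harm] using Finset.single_le_sum (f := fun j : ℕ => (1 : ℝ) / j) (fun j _ => by positivity) hmem

lemma harm_sub_harm {m n : ℕ} (h : m ≤ n) :
    harm n - harm m = ∑ j ∈ Finset.Ioc m n, (1 : ℝ) / j := by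
  rw [harm_eq_sum_Ioc, harm_eq_sum_Ioc, ← Finset.sum_Ioc_consecutive _ m.zero_le h,
    add_sub_cancel_left]

lemma mul_harm_sub_harm_le {m n : ℕ} (h : m ≤ n) :
    (m : ℝ) * (harm n - harm m) ≤ n - m := by
  have hterm : ∀ j ∈ Finset.Ioc m n, (m : ℝ) * (1 / j) ≤ 1 := fun j hj => by
    have hmj : m < j := (Finset.mem_Ioc.1 hj).1
    rw [mul_one_div]
    exact div_le_one_of_le₀ (by exact_mod_cast hmj.le) (Nat.cast_nonneg j)
  calc (m : ℝ) * (harm n - harm m)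
      = ∑ j ∈ Finset.Ioc m n, (m : ℝ) * (1 / j) := by rw [harm_sub_harm h, Finset.mul_sum]
    _ ≤ ∑ _j ∈ Finset.Ioc m n, (1 : ℝ) := Finset.sum_le_sum hterm
    _ = n - m := by simp [Nat.cast_sub h]

theorem stmt_7 (n m : ℕ) (hm : 1 ≤ m) (hnm : m ≤ n) :
    2 * ((n : ℝ) + 3 + ((n : ℝ) + 1) * harm n - ((m : ℝ) + 2) * harm m
      - ((n : ℝ) - m + 3) * harm (n - m + 1)) ≤ 4 * n := by
  set k := n - m + 1 with hk
  have hkR : (k : ℝ) = n - m + 1 := by rw [hk, Nat.cast_add_one, Nat.cast_sub hnm]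
  have tail_m := mul_harm_sub_harm_le hnm
  have tail_k := mul_harm_sub_harm_le (show k ≤ n by omega)
  have harm_m := one_le_harm hm
  have harm_k := one_le_harm (show 1 ≤ k by omega)
  rw [hkR] at tail_k
  linear_combination 2 * tail_m + 2 * tail_k + 4 * harm_m + 4 * harm_k
end

section
/- For integers n ≥ m ≥ 1 with m > 2, the quantity E[C_{n,m}]/n − 2, where E[C_{n,m}] = 2·[n + 3 + (n+1)·h_n − (m+2)·h_m − (n−m+3)·h_{n−m+1}], satisfies E[C_{n,m}]/n − 2 ≥ 2·[(m−2)·log n − |(m+2)·h_m − 3|]/n. -/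
lemma harm_eq_harmonic (k : ℕ) : harm k = harmonic k := by
  simp [harm, harmonic_eq_sum_Icc, one_div]

lemma harm_mono : Monotone harm := fun _ _ hab =>
  Finset.sum_le_sum_of_subset_of_nonneg (Finset.Icc_subset_Icc le_rfl hab)
    fun _ _ _ => by positivity

lemma log_le_harm (k : ℕ) : Real.log k ≤ harm k := by
  simpa [harm_eq_harmonic] using log_le_harmonic_floor k k.cast_nonneg

lemma sub_two_mul_log_le_harm_sub {m n : ℕ} (hm : 2 ≤ m) (hmn : m ≤ n) :
    ((m : ℝ) - 2) * Real.log n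
      ≤ ((n : ℝ) + 1) * harm n - ((n : ℝ) - m + 3) * harm (n - m + 1) := by
  have hm' : (2 : ℝ) ≤ m := by exact_mod_cast hm
  have hmn' : (m : ℝ) ≤ n := by exact_mod_cast hmn
  calc ((m : ℝ) - 2) * Real.log n ≤ ((m : ℝ) - 2) * harm n := by
        gcongr
        exact log_le_harm n
    _ = ((n : ℝ) + 1) * harm n - ((n : ℝ) - m + 3) * harm n := by ring
    _ ≤ _ := by
        gcongr
        exact harm_mono (by omega)

theorem stmt_12 (n m : ℕ) (hm : 2 < m) (hnm : m ≤ n) :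
    2 * ((n : ℝ) + 3 + ((n : ℝ) + 1) * harm n - ((m : ℝ) + 2) * harm m
      - ((n : ℝ) - m + 3) * harm (n - m + 1)) / n - 2
      ≥ 2 * (((m : ℝ) - 2) * Real.log n - |((m : ℝ) + 2) * harm m - 3|) / n := by
  have hn : (0 : ℝ) < n := by exact_mod_cast (show 0 < n by omega)
  rw [ge_iff_le, div_sub' hn.ne', div_le_div_iff_of_pos_right hn]
  linarith [sub_two_mul_log_le_harm_sub hm.le hnm, le_abs_self (((m : ℝ) + 2) * harm m - 3)]
end

section
/- Let θ > 0, let W be a nonnegative integrable random variable, let W* =_d U^{1/θ}(W+1) with U ~ Uniform[0,1] independent of W, and let D_θ be a Dickman(θ) random variable satisfying D_θ =_d U^{1/θ}(D_θ+1). Then d_1(W*, D_θ) ≤ (θ/(θ+1))·d_1(W, D_θ), i.e., the generalized Dickman bias transformation is a contraction in Wasserstein-1 distance with factor θ/(θ+1). -/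
open MeasureTheory ProbabilityTheory

/-- The Wasserstein-1 distance between two laws on `ℝ`, defined as the supremum over
1-Lipschitz test functions of the difference of their expectations. -/
noncomputable def d1 (μ ν : Measure ℝ) : ℝ :=
  ⨆ h : {h : ℝ → ℝ // LipschitzWith 1 h}, |∫ x, h.1 x ∂μ - ∫ x, h.1 x ∂ν|

namespace Stmt15Aux

lemma lip_abs {h : ℝ → ℝ} (hh : LipschitzWith 1 h) (x y : ℝ) :
    |h x - h y| ≤ |x - y| := by
  have := hh.dist_le_mul x y
  simpa [Real.dist_eq] using this

lemma instProbRestrict : IsProbabilityMeasure (volume.restrict (Set.Icc (0:ℝ) 1)) := by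
  constructor
  simp [Real.volume_Icc]

/-- Integrability of the composed test function on the product measure. -/
lemma aux_int {θ : ℝ} (hθ : 0 < θ) (μW : Measure ℝ) [IsProbabilityMeasure μW]
    (hμW : Integrable id μW) {h : ℝ → ℝ} (hh : LipschitzWith 1 h) :
    Integrable (fun p : ℝ × ℝ => h (p.1 ^ (1/θ) * (p.2 + 1)))
      ((volume.restrict (Set.Icc (0:ℝ) 1)).prod μW) := by
  set μU := volume.restrict (Set.Icc (0:ℝ) 1) with hμU
  haveI : IsProbabilityMeasure μU := instProbRestrict
  have hmeas : Measurable (fun p : ℝ × ℝ => h (p.1 ^ (1/θ) * (p.2 + 1))) := by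
    have h1 : Measurable fun p : ℝ × ℝ => p.1 ^ (1/θ) :=
      (Real.continuous_rpow_const (by positivity)).measurable.comp measurable_fst
    exact hh.continuous.measurable.comp (h1.mul (measurable_snd.add_const 1))
  have hae : ∀ᵐ p : ℝ × ℝ ∂(μU.prod μW), p.1 ∈ Set.Icc (0:ℝ) 1 := by
    rw [ae_iff]
    have hset : {p : ℝ × ℝ | ¬ p.1 ∈ Set.Icc (0:ℝ) 1} = (Set.Icc (0:ℝ) 1)ᶜ ×ˢ Set.univ := by
      ext p; simp
    rw [hset, Measure.prod_prod]
    have h0 : μU (Set.Icc (0:ℝ) 1)ᶜ = 0 := by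
      rw [hμU, Measure.restrict_apply measurableSet_Icc.compl]
      simp
    simp [h0]
  have hint2 : Integrable (fun x : ℝ => |h 0| + (|x| + 1)) μW :=
    (integrable_const _).add (hμW.abs.add (integrable_const _))
  have hg : Integrable (fun p : ℝ × ℝ => |h 0| + (|p.2| + 1)) (μU.prod μW) := by
    have hmap : Measure.map Prod.snd (μU.prod μW) = μW := by
      rw [Measure.map_snd_prod]; simp
    have h3 : Integrable (fun x : ℝ => |h 0| + (|x| + 1)) (Measure.map Prod.snd (μU.prod μW)) := by
      rw [hmap]; exact hint2
    have := (integrable_map_measure (by rw [hmap]; exact hint2.aestronglyMeasurable)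
      measurable_snd.aemeasurable).mp h3
    exact this
  refine Integrable.mono' hg hmeas.aestronglyMeasurable ?_
  filter_upwards [hae] with p hp
  have hge0 : 0 ≤ p.1 ^ (1/θ) := Real.rpow_nonneg hp.1 _
  have hle1 : p.1 ^ (1/θ) ≤ 1 := Real.rpow_le_one hp.1 hp.2 (by positivity)
  set z := p.1 ^ (1/θ) * (p.2 + 1) with hz
  have hx : |z| ≤ |p.2| + 1 := by
    rw [hz, abs_mul]
    calc |p.1 ^ (1/θ)| * |p.2 + 1| ≤ 1 * |p.2 + 1| := by
          apply mul_le_mul_of_nonneg_right _ (abs_nonneg _)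
          rwa [abs_of_nonneg hge0]
      _ = |p.2 + 1| := one_mul _
      _ ≤ |p.2| + 1 := by simpa using abs_add_le p.2 1
  rw [Real.norm_eq_abs]
  have h1 : |h z - h 0| ≤ |z| := by simpa using lip_abs hh z 0
  have h2 : |h z| - |h 0| ≤ |h z - h 0| := abs_sub_abs_le_abs_sub _ _
  linarith

/-- Transfer lemma: express the expectation of `h` of the transformed variable as an
iterated integral. -/
lemma transfer {Ω : Type*} [MeasureSpace Ω] [IsProbabilityMeasure (ℙ : Measure Ω)]
    {θ : ℝ} (hθ : 0 < θ) {W U : Ω → ℝ} (hWmeas : Measurable W) (hWint : Integrable W)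
    (hUmeas : Measurable U) (hUunif : Measure.map U ℙ = volume.restrict (Set.Icc (0:ℝ) 1))
    (hindep : IndepFun U W) {h : ℝ → ℝ} (hh : LipschitzWith 1 h) :
    ∫ ω, h (U ω ^ (1/θ) * (W ω + 1)) =
      ∫ u in Set.Icc (0:ℝ) 1, ∫ x, h (u ^ (1/θ) * (x + 1)) ∂(Measure.map W ℙ) := by
  haveI : IsProbabilityMeasure (Measure.map W ℙ) :=
    Measure.isProbabilityMeasure_map hWmeas.aemeasurable
  have hidW : Integrable id (Measure.map W ℙ) := by
    rw [integrable_map_measure aestronglyMeasurable_id hWmeas.aemeasurable]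
    simpa [Function.comp] using hWint
  have hF := aux_int hθ (Measure.map W ℙ) hidW hh
  have hmeasF : Measurable (fun p : ℝ × ℝ => h (p.1 ^ (1/θ) * (p.2 + 1))) := by
    have h1 : Measurable fun p : ℝ × ℝ => p.1 ^ (1/θ) :=
      (Real.continuous_rpow_const (by positivity)).measurable.comp measurable_fst
    exact hh.continuous.measurable.comp (h1.mul (measurable_snd.add_const 1))
  have hpair : Measurable fun ω => (U ω, W ω) := hUmeas.prodMk hWmeas
  have hmap : Measure.map (fun ω => (U ω, W ω)) ℙ
      = (Measure.map U ℙ).prod (Measure.map W ℙ) :=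
    (indepFun_iff_map_prod_eq_prod_map_map hUmeas.aemeasurable hWmeas.aemeasurable).mp hindep
  calc ∫ ω, h (U ω ^ (1/θ) * (W ω + 1))
      = ∫ p, h (p.1 ^ (1/θ) * (p.2 + 1)) ∂(Measure.map (fun ω => (U ω, W ω)) ℙ) := by
        rw [integral_map hpair.aemeasurable hmeasF.aestronglyMeasurable]
    _ = ∫ p, h (p.1 ^ (1/θ) * (p.2 + 1))
          ∂((volume.restrict (Set.Icc (0:ℝ) 1)).prod (Measure.map W ℙ)) := by
        rw [hmap, hUunif]
    _ = ∫ u in Set.Icc (0:ℝ) 1, ∫ x, h (u ^ (1/θ) * (x + 1)) ∂(Measure.map W ℙ) :=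
        integral_prod _ hF

lemma integrable_lip (μ : Measure ℝ) [IsProbabilityMeasure μ]
    (hμ : Integrable id μ) {h : ℝ → ℝ} (hh : LipschitzWith 1 h) :
    Integrable h μ := by
  refine Integrable.mono' ((integrable_const |h 0|).add hμ.abs)
    hh.continuous.aestronglyMeasurable ?_
  filter_upwards with x
  rw [Real.norm_eq_abs]
  have h1 : |h x - h 0| ≤ |x| := by simpa using lip_abs hh x 0
  have h2 : |h x| - |h 0| ≤ |h x - h 0| := abs_sub_abs_le_abs_sub _ _
  simp only [Pi.add_apply, id_eq]
  linarith

/-- Any 1-Lipschitz test difference is bounded by the sum of first absolute moments. -/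
lemma test_bound (μ ν : Measure ℝ) [IsProbabilityMeasure μ] [IsProbabilityMeasure ν]
    (hμ : Integrable id μ) (hν : Integrable id ν) {h : ℝ → ℝ} (hh : LipschitzWith 1 h) :
    |∫ x, h x ∂μ - ∫ x, h x ∂ν| ≤ (∫ x, |x| ∂μ) + ∫ x, |x| ∂ν := by
  have hintμ : Integrable h μ := integrable_lip μ hμ hh
  have hintν : Integrable h ν := integrable_lip ν hν hh
  have key : ∀ (ρ : Measure ℝ) [IsProbabilityMeasure ρ], Integrable id ρ → Integrable h ρ →
      |∫ x, (h x - h 0) ∂ρ| ≤ ∫ x, |x| ∂ρ := by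
    intro ρ _ hid hint
    calc |∫ x, (h x - h 0) ∂ρ| ≤ ∫ x, |h x - h 0| ∂ρ := by
          simpa [Real.norm_eq_abs] using
            norm_integral_le_integral_norm (μ := ρ) (fun x => h x - h 0)
      _ ≤ ∫ x, |x| ∂ρ := by
          apply integral_mono (hint.sub (integrable_const _)).abs
          · simpa [id_eq] using hid.abs
          · intro x; simpa using lip_abs hh x 0
  have e1 : ∫ x, h x ∂μ - ∫ x, h x ∂ν
      = (∫ x, (h x - h 0) ∂μ) - ∫ x, (h x - h 0) ∂ν := by
    rw [integral_sub hintμ (integrable_const _), integral_sub hintν (integrable_const _)]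
    simp
  rw [e1]
  have bμ := key μ hμ hintμ
  have bν := key ν hν hintν
  have habs : |(∫ x, (h x - h 0) ∂μ) - ∫ x, (h x - h 0) ∂ν|
      ≤ |∫ x, (h x - h 0) ∂μ| + |∫ x, (h x - h 0) ∂ν| := abs_sub _ _
  linarith

lemma bdd (μ ν : Measure ℝ) [IsProbabilityMeasure μ] [IsProbabilityMeasure ν]
    (hμ : Integrable id μ) (hν : Integrable id ν) :
    BddAbove (Set.range fun h : {h : ℝ → ℝ // LipschitzWith 1 h} =>
      |∫ x, h.1 x ∂μ - ∫ x, h.1 x ∂ν|) := by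
  refine ⟨(∫ x, |x| ∂μ) + ∫ x, |x| ∂ν, ?_⟩
  rintro r ⟨h, rfl⟩
  exact test_bound μ ν hμ hν h.2

/-- Scaled Lipschitz test functions are controlled by `d1`. -/
lemma scaled_bound (μ ν : Measure ℝ) [IsProbabilityMeasure μ] [IsProbabilityMeasure ν]
    (hμ : Integrable id μ) (hν : Integrable id ν) {h : ℝ → ℝ} (hh : LipschitzWith 1 h)
    {c : ℝ} (hc : 0 < c) :
    |(∫ x, h (c * (x + 1)) ∂μ) - ∫ x, h (c * (x + 1)) ∂ν| ≤ c * d1 μ ν := by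
  set g : ℝ → ℝ := fun x => c⁻¹ * h (c * (x + 1)) with hgdef
  have hlip : LipschitzWith 1 g := by
    apply LipschitzWith.of_dist_le_mul
    intro x y
    rw [Real.dist_eq, Real.dist_eq, NNReal.coe_one, one_mul]
    have hgxy : g x - g y = c⁻¹ * (h (c * (x + 1)) - h (c * (y + 1))) := by
      rw [hgdef]; ring
    rw [hgxy, abs_mul, abs_of_nonneg (inv_nonneg.mpr hc.le)]
    have h1 : |h (c * (x + 1)) - h (c * (y + 1))| ≤ |c * (x + 1) - c * (y + 1)| :=
      lip_abs hh _ _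
    have h2 : |c * (x + 1) - c * (y + 1)| = c * |x - y| := by
      rw [show c * (x + 1) - c * (y + 1) = c * (x - y) by ring, abs_mul, abs_of_nonneg hc.le]
    calc c⁻¹ * |h (c * (x + 1)) - h (c * (y + 1))| ≤ c⁻¹ * (c * |x - y|) := by
          apply mul_le_mul_of_nonneg_left _ (inv_nonneg.mpr hc.le)
          rw [← h2]; exact h1
      _ = |x - y| := by field_simp
  have hb : |∫ x, g x ∂μ - ∫ x, g x ∂ν| ≤ d1 μ ν :=
    le_ciSup (bdd μ ν hμ hν) (⟨g, hlip⟩ : {h : ℝ → ℝ // LipschitzWith 1 h})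
  have e : ∀ ρ : Measure ℝ, (∫ x, g x ∂ρ) = c⁻¹ * ∫ x, h (c * (x + 1)) ∂ρ := by
    intro ρ
    rw [hgdef]
    exact integral_const_mul _ _
  have e2 : |(∫ x, h (c * (x + 1)) ∂μ) - ∫ x, h (c * (x + 1)) ∂ν|
      = c * |∫ x, g x ∂μ - ∫ x, g x ∂ν| := by
    rw [e μ, e ν, ← mul_sub, abs_mul, abs_of_nonneg (inv_nonneg.mpr hc.le)]
    field_simp
  rw [e2]
  exact mul_le_mul_of_nonneg_left hb hc.le

end Stmt15Aux

open Stmt15Aux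
theorem stmt_15 {Ω : Type*} [MeasureSpace Ω] [IsProbabilityMeasure (ℙ : Measure Ω)]
    (θ : ℝ) (hθ : 0 < θ)
    (W : Ω → ℝ) (hWmeas : Measurable W) (hWpos : ∀ ω, 0 ≤ W ω) (hWint : Integrable W)
    (U : Ω → ℝ) (hUmeas : Measurable U)
    (hUunif : Measure.map U ℙ = volume.restrict (Set.Icc (0:ℝ) 1))
    (hindep : IndepFun U W)
    {Ω' : Type*} [MeasureSpace Ω'] [IsProbabilityMeasure (ℙ : Measure Ω')]
    (D : Ω' → ℝ) (hDmeas : Measurable D) (hDpos : ∀ ω, 0 ≤ D ω) (hDint : Integrable D)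
    (V : Ω' → ℝ) (hVmeas : Measurable V)
    (hVunif : Measure.map V ℙ = volume.restrict (Set.Icc (0:ℝ) 1))
    (hindep' : IndepFun V D)
    -- `D` has the generalized Dickman distribution: it is a fixed point of the transform
    (hfix : Measure.map (fun ω => V ω ^ (1 / θ) * (D ω + 1)) ℙ = Measure.map D ℙ) :
    d1 (Measure.map (fun ω => U ω ^ (1 / θ) * (W ω + 1)) ℙ) (Measure.map D ℙ)
      ≤ (θ / (θ + 1)) * d1 (Measure.map W ℙ) (Measure.map D ℙ) := by
  classical
  have hθ1 : (0:ℝ) < 1/θ := by positivity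
  haveI hprobμ : IsProbabilityMeasure (Measure.map W ℙ) :=
    Measure.isProbabilityMeasure_map hWmeas.aemeasurable
  haveI hprobν : IsProbabilityMeasure (Measure.map D ℙ) :=
    Measure.isProbabilityMeasure_map hDmeas.aemeasurable
  have hidμ : Integrable id (Measure.map W ℙ) := by
    rw [integrable_map_measure aestronglyMeasurable_id hWmeas.aemeasurable]
    simpa [Function.comp] using hWint
  have hidν : Integrable id (Measure.map D ℙ) := by
    rw [integrable_map_measure aestronglyMeasurable_id hDmeas.aemeasurable]
    simpa [Function.comp] using hDint
  have hTmeas : Measurable (fun ω => U ω ^ (1/θ) * (W ω + 1)) :=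
    (((Real.continuous_rpow_const hθ1.le).measurable).comp hUmeas).mul (hWmeas.add_const 1)
  haveI : Nonempty {h : ℝ → ℝ // LipschitzWith 1 h} :=
    ⟨⟨fun _ => 0, (LipschitzWith.const 0).weaken zero_le_one⟩⟩
  show (⨆ h : {h : ℝ → ℝ // LipschitzWith 1 h},
      |∫ x, h.1 x ∂(Measure.map (fun ω => U ω ^ (1/θ) * (W ω + 1)) ℙ)
        - ∫ x, h.1 x ∂(Measure.map D ℙ)|) ≤ _
  apply ciSup_le
  intro h
  -- rewrite both integrals as iterated integrals
  have e1 : ∫ x, h.1 x ∂(Measure.map (fun ω => U ω ^ (1/θ) * (W ω + 1)) ℙ)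
      = ∫ u in Set.Icc (0:ℝ) 1, ∫ x, h.1 (u ^ (1/θ) * (x + 1)) ∂(Measure.map W ℙ) := by
    rw [integral_map hTmeas.aemeasurable h.2.continuous.aestronglyMeasurable]
    exact transfer hθ hWmeas hWint hUmeas hUunif hindep h.2
  have hTVmeas : Measurable (fun ω => V ω ^ (1/θ) * (D ω + 1)) :=
    (((Real.continuous_rpow_const hθ1.le).measurable).comp hVmeas).mul (hDmeas.add_const 1)
  have e2 : ∫ x, h.1 x ∂(Measure.map D ℙ)
      = ∫ u in Set.Icc (0:ℝ) 1, ∫ x, h.1 (u ^ (1/θ) * (x + 1)) ∂(Measure.map D ℙ) := by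
    conv_lhs => rw [← hfix]
    rw [integral_map hTVmeas.aemeasurable h.2.continuous.aestronglyMeasurable]
    exact transfer hθ hDmeas hDint hVmeas hVunif hindep' h.2
  rw [e1, e2]
  set Φ : ℝ → ℝ := fun u => ∫ x, h.1 (u ^ (1/θ) * (x + 1)) ∂(Measure.map W ℙ) with hΦdef
  set Ψ : ℝ → ℝ := fun u => ∫ x, h.1 (u ^ (1/θ) * (x + 1)) ∂(Measure.map D ℙ) with hΨdef
  have hΦ : Integrable Φ (volume.restrict (Set.Icc (0:ℝ) 1)) :=
    (aux_int hθ (Measure.map W ℙ) hidμ h.2).integral_prod_left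
  have hΨ : Integrable Ψ (volume.restrict (Set.Icc (0:ℝ) 1)) :=
    (aux_int hθ (Measure.map D ℙ) hidν h.2).integral_prod_left
  set K := d1 (Measure.map W ℙ) (Measure.map D ℙ) with hKdef
  have hrmeas : Measurable fun u : ℝ => u ^ (1/θ) * K :=
    (Real.continuous_rpow_const hθ1.le).measurable.mul_const K
  have hrint : Integrable (fun u : ℝ => u ^ (1/θ) * K)
      (volume.restrict (Set.Icc (0:ℝ) 1)) := by
    refine Integrable.mono' (integrable_const |K|) hrmeas.aestronglyMeasurable ?_
    filter_upwards [ae_restrict_mem measurableSet_Icc] with u hu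
    rw [Real.norm_eq_abs, abs_mul]
    have h1 : |u ^ (1/θ)| ≤ 1 := by
      rw [abs_of_nonneg (Real.rpow_nonneg hu.1 _)]
      exact Real.rpow_le_one hu.1 hu.2 hθ1.le
    calc |u ^ (1/θ)| * |K| ≤ 1 * |K| := mul_le_mul_of_nonneg_right h1 (abs_nonneg _)
      _ = |K| := one_mul _
  have hpt : ∀ u ∈ Set.Icc (0:ℝ) 1, |Φ u - Ψ u| ≤ u ^ (1/θ) * K := by
    intro u hu
    rcases eq_or_lt_of_le hu.1 with h0 | h0
    · rw [← h0, hΦdef, hΨdef]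
      have hz : (0:ℝ) ^ (1/θ) = 0 := Real.zero_rpow (ne_of_gt hθ1)
      have hz2 : (0:ℝ) ^ θ⁻¹ = 0 := Real.zero_rpow (ne_of_gt (by positivity))
      simp [hz, hz2]
    · exact scaled_bound (Measure.map W ℙ) (Measure.map D ℙ) hidμ hidν h.2
        (Real.rpow_pos_of_pos h0 _)
  have hcomp : (∫ u in Set.Icc (0:ℝ) 1, u ^ (1/θ)) = θ / (θ + 1) := by
    have ha : (-1:ℝ) < 1/θ := by linarith
    have hb : (1/θ + 1 : ℝ) ≠ 0 := by positivity
    have hc : θ ≠ 0 := ne_of_gt hθ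
    rw [MeasureTheory.integral_Icc_eq_integral_Ioc,
      ← intervalIntegral.integral_of_le (zero_le_one (α := ℝ)),
      integral_rpow (Or.inl ha), Real.one_rpow, Real.zero_rpow hb]
    rw [sub_zero, show (1:ℝ)/θ + 1 = (θ+1)/θ by field_simp; ring, one_div_div]
  calc |(∫ u in Set.Icc (0:ℝ) 1, Φ u) - ∫ u in Set.Icc (0:ℝ) 1, Ψ u|
      = |∫ u in Set.Icc (0:ℝ) 1, (Φ u - Ψ u)| := by rw [integral_sub hΦ hΨ]
    _ ≤ ∫ u in Set.Icc (0:ℝ) 1, |Φ u - Ψ u| := by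
        simpa [Real.norm_eq_abs] using
          norm_integral_le_integral_norm (μ := volume.restrict (Set.Icc (0:ℝ) 1))
            (fun u => Φ u - Ψ u)
    _ ≤ ∫ u in Set.Icc (0:ℝ) 1, u ^ (1/θ) * K :=
        setIntegral_mono_on (hΦ.sub hΨ).abs hrint measurableSet_Icc hpt
    _ = (∫ u in Set.Icc (0:ℝ) 1, u ^ (1/θ)) * K := integral_mul_const _ _
    _ = (θ / (θ + 1)) * K := by rw [hcomp]
end

section
/- For integers n ≥ 1, define f_1 = 0 and suppose f_p = E|C(p; U) − C(p−1; U)| where C(0;u)=0, C(p;u) = p−1+C(⌊p·u_1⌋; shift(u)) and U = (U_1, U_2, …) are i.i.d. uniform on [0,1]. Then f_p ≤ 1 + (1/(p(p−1)))·Σ_{k=1}^{p−1} k·f_k for all p ≥ 2, and consequently f_p ≤ 2 for all p ≥ 1. -/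
/-!
Write `Δ_p(u) = C(p; u) - C(p-1; u)`, which is nonnegative because `C` is monotone in `p`.
Both counts split at the same first draw `x = u₀`, with pivot ranks `⌊p x⌋` and `⌊(p-1) x⌋`;
these agree unless `x ∈ [k/p, k/(p-1))` for some `1 ≤ k ≤ p-1`, in which case they are `k` and
`k-1`. Hence `Δ_p(u) = 1 + ∑ₖ 1[x ∈ [k/p, k/(p-1))] Δ_k(shift u)`. The first draw is independent
of the shifted sequence, which has the same law as the whole sequence, so taking expectations
gives the recursion with equality, `f_p = 1 + (1/(p(p-1))) ∑ₖ k f_k`. Since `∑_{k<p} k = p(p-1)/2`,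
strong induction turns the bound `f_k ≤ 2` for `k < p` into `f_p ≤ 2`.
-/

open MeasureTheory ProbabilityTheory

/-- Comparison count of Quickselect for the minimum along a fixed sequence of draws.
For sequences with values in `[0,1)` the `min` is inactive and this agrees with the
recursion `C (n+1) u = n + C ⌊(n+1) u₀⌋ (shift u)`. -/
noncomputable def C : ℕ → (ℕ → ℝ) → ℕ
  | 0, _ => 0
  | (n + 1), u => n + C (min (⌊((n : ℝ) + 1) * u 0⌋.toNat) n) (fun k => u (k + 1))
  decreasing_by exact Nat.lt_succ_of_le (Nat.min_le_right _ _)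

namespace Quickselect

def shift (u : ℕ → ℝ) : ℕ → ℝ := fun k => u (k + 1)

/- Indices follow `C (n + 1)`: `pivot n x` is the pivot rank `⌊p x⌋` and `jumpSet n k` the
interval `[k/p, k/(p-1))` of the paper, for `p = n + 1` keys. -/
noncomputable def pivot (n : ℕ) (x : ℝ) : ℕ := min ⌊((n : ℝ) + 1) * x⌋.toNat n

noncomputable def increment (p : ℕ) (u : ℕ → ℝ) : ℝ := C p u - C (p - 1) u

noncomputable def jumpSet (n k : ℕ) : Set ℝ := Set.Ico ((k : ℝ) / (n + 1)) (k / n)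

lemma C_zero (u : ℕ → ℝ) : C 0 u = 0 := by rw [C]

lemma C_succ (n : ℕ) (u : ℕ → ℝ) : C (n + 1) u = n + C (pivot n (u 0)) (shift u) := by
  rw [C]; rfl

lemma C_one (u : ℕ → ℝ) : C 1 u = 0 := by
  simp [C_succ, pivot, C_zero]

lemma pivot_le (n : ℕ) (x : ℝ) : pivot n x ≤ n := min_le_right _ _

lemma pivot_le_pivot_succ (n : ℕ) (x : ℝ) : pivot n x ≤ pivot (n + 1) x := by
  unfold pivot
  refine min_le_min ?_ (Nat.le_succ n)
  rcases le_or_gt 0 x with hx | hx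
  · push_cast
    exact Int.toNat_le_toNat (Int.floor_le_floor (by nlinarith))
  · simp [Int.toNat_of_nonpos (Int.floor_nonpos (by nlinarith : ((n : ℝ) + 1) * x ≤ 0))]

lemma pivot_eq_floor {x : ℝ} (n : ℕ) (hx0 : 0 ≤ x) (hx1 : x < 1) :
    pivot n x = ⌊((n : ℝ) + 1) * x⌋₊ := by
  rw [pivot, Int.floor_toNat, min_eq_left_iff, ← Nat.lt_succ_iff, Nat.floor_lt (by positivity)]
  push_cast
  nlinarith

lemma C_le_mul_self (p : ℕ) (u : ℕ → ℝ) : C p u ≤ p * p := by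
  induction p using Nat.strong_induction_on generalizing u with
  | _ p ih =>
    rcases p with _ | n
    · simp [C_zero]
    · have hpiv := pivot_le n (u 0)
      have := ih _ (Nat.lt_succ_of_le hpiv) (shift u)
      have := Nat.mul_le_mul hpiv hpiv
      rw [C_succ]
      nlinarith

lemma C_le_C_of_le {m n : ℕ} (hmn : m ≤ n) (u : ℕ → ℝ) : C m u ≤ C n u := by
  induction n using Nat.strong_induction_on generalizing m u with
  | _ n ih =>
    rcases hmn.eq_or_lt with rfl | hlt
    · rfl
    obtain ⟨k, rfl⟩ : ∃ k, n = k + 1 := ⟨n - 1, by omega⟩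
    refine (ih k k.lt_succ_self (by omega) u).trans ?_
    rcases k with _ | j
    · simp [C_zero]
    · rw [C_succ, C_succ (j + 1)]
      have := ih _ (by have := pivot_le (j + 1) (u 0); omega)
        (pivot_le_pivot_succ j (u 0)) (shift u)
      omega

lemma increment_nonneg (p : ℕ) (u : ℕ → ℝ) : 0 ≤ increment p u := by
  rw [increment, sub_nonneg, Nat.cast_le]
  exact C_le_C_of_le (Nat.sub_le p 1) u

lemma increment_le (p : ℕ) (u : ℕ → ℝ) : increment p u ≤ p * p := by
  have h : ((C p u : ℕ) : ℝ) ≤ p * p := by exact_mod_cast C_le_mul_self p u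
  rw [increment]
  linarith [(C (p - 1) u).cast_nonneg (α := ℝ)]

lemma floor_mul_le_floor_succ_mul (m : ℕ) {x : ℝ} (hx0 : 0 ≤ x) :
    ⌊(m : ℝ) * x⌋₊ ≤ ⌊((m : ℝ) + 1) * x⌋₊ :=
  Nat.floor_le_floor (by nlinarith)

lemma floor_succ_mul_le (m : ℕ) {x : ℝ} (hx0 : 0 ≤ x) (hx1 : x ≤ 1) :
    ⌊((m : ℝ) + 1) * x⌋₊ ≤ ⌊(m : ℝ) * x⌋₊ + 1 := by
  rw [← Nat.floor_add_one (by positivity)]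
  exact Nat.floor_le_floor (by nlinarith)

lemma mem_jumpSet_iff {n k : ℕ} {x : ℝ} (hn : 0 < n) (hx0 : 0 ≤ x) (hx1 : x < 1) :
    x ∈ jumpSet n k ↔
      ⌊((n : ℝ) + 1) * x⌋₊ = k ∧ ⌊(n : ℝ) * x⌋₊ + 1 = k := by
  have hsandwich := floor_succ_mul_le n hx0 hx1.le
  have hmono := floor_mul_le_floor_succ_mul n hx0
  rw [jumpSet, Set.mem_Ico, div_le_iff₀' (by positivity), lt_div_iff₀' (by positivity),
    ← Nat.floor_lt (by positivity), Nat.floor_eq_iff (by positivity)]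
  constructor
  · rintro ⟨hk, hlt⟩
    have hfl : ⌊((n : ℝ) + 1) * x⌋₊ = k := by
      rw [Nat.floor_eq_iff (by positivity)]
      refine ⟨by linarith, ?_⟩
      have := (Nat.floor_lt (by positivity)).1 hlt
      nlinarith
    refine ⟨⟨by linarith, ?_⟩, by omega⟩
    rw [← hfl]
    exact Nat.lt_floor_add_one _
  · rintro ⟨⟨hk, _⟩, hfl⟩
    exact ⟨by linarith, by omega⟩

lemma sum_indicator_jumpSet_mul {n : ℕ} {x : ℝ} (hn : 0 < n) (hx0 : 0 ≤ x) (hx1 : x < 1)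
    (g : ℕ → ℝ) :
    ∑ k ∈ Finset.Icc 1 n, (jumpSet n k).indicator 1 x * g k =
      if ⌊(n : ℝ) * x⌋₊ + 1 = ⌊((n : ℝ) + 1) * x⌋₊ then g ⌊((n : ℝ) + 1) * x⌋₊ else 0 := by
  have ha : ⌊((n : ℝ) + 1) * x⌋₊ ≤ n := by
    rw [← Nat.lt_succ_iff, Nat.floor_lt (by positivity)]
    push_cast
    nlinarith
  generalize hA : ⌊((n : ℝ) + 1) * x⌋₊ = a at ha ⊢
  have hterm : ∀ k : ℕ, (jumpSet n k).indicator 1 x * g k =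
      if a = k then (if ⌊(n : ℝ) * x⌋₊ + 1 = a then g a else 0) else 0 := by
    intro k
    classical
    simp only [Set.indicator_apply, mem_jumpSet_iff hn hx0 hx1, hA, Pi.one_apply]
    by_cases hk : a = k <;> by_cases hb : ⌊(n : ℝ) * x⌋₊ + 1 = a <;> simp [hk, hb]
  rw [Finset.sum_congr rfl fun k _ => hterm k, Finset.sum_ite_eq]
  split_ifs with hmem hb hb <;> first | rfl | (simp only [Finset.mem_Icc] at hmem; omega)

lemma increment_succ {n : ℕ} {u : ℕ → ℝ} (hn : 0 < n) (hu0 : 0 ≤ u 0) (hu1 : u 0 < 1) :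
    increment (n + 1) u = 1 + ∑ k ∈ Finset.Icc 1 n,
      (jumpSet n k).indicator 1 (u 0) * increment k (shift u) := by
  obtain ⟨m, rfl⟩ : ∃ m, n = m + 1 := ⟨n - 1, by omega⟩
  have hfloor : pivot m (u 0) = ⌊((m + 1 : ℕ) : ℝ) * u 0⌋₊ := by
    rw [pivot_eq_floor m hu0 hu1]; push_cast; rfl
  rw [sum_indicator_jumpSet_mul hn hu0 hu1, increment, Nat.add_sub_cancel, C_succ, C_succ,
    pivot_eq_floor _ hu0 hu1, hfloor]
  split_ifs with hb
  · rw [increment, ← hb, Nat.add_sub_cancel]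
    push_cast
    ring
  · have := floor_mul_le_floor_succ_mul (m + 1) hu0
    have := floor_succ_mul_le (m + 1) hu0 hu1.le
    rw [show ⌊(((m + 1 : ℕ) : ℝ) + 1) * u 0⌋₊ = ⌊((m + 1 : ℕ) : ℝ) * u 0⌋₊ by omega]
    push_cast
    ring

lemma measurable_shift : Measurable shift :=
  measurable_pi_lambda _ fun k => measurable_pi_apply (k + 1)

lemma measurable_pivot (n : ℕ) : Measurable (pivot n) :=
  (measurable_from_top (f := fun z : ℤ => min z.toNat n)).comp
    (Int.measurable_floor.comp (measurable_const_mul _))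

lemma measurable_C (p : ℕ) : Measurable (C p) := by
  induction p using Nat.strong_induction_on with
  | _ p ih =>
    rcases p with _ | n
    · simp only [funext C_zero, measurable_const]
    · have hF : Measurable fun q : (ℕ → ℝ) × ℕ => C (min q.2 n) q.1 :=
        measurable_from_prod_countable_left fun j => ih (min j n) (by omega)
      have hC : C (n + 1) = fun u => n + C (min (pivot n (u 0)) n) (shift u) := by
        funext u
        rw [C_succ, min_eq_left (pivot_le n _)]
      rw [hC]
      exact measurable_from_nat.comp
        (hF.comp (measurable_shift.prodMk ((measurable_pivot n).comp (measurable_pi_apply 0))))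

lemma measurable_increment (p : ℕ) : Measurable (increment p) :=
  (measurable_from_nat.comp (measurable_C p)).sub (measurable_from_nat.comp (measurable_C (p - 1)))

lemma integrable_increment_comp {Ω : Type*} {mΩ : MeasurableSpace Ω} {μ : Measure Ω}
    [IsFiniteMeasure μ] {V : Ω → ℕ → ℝ} (hV : Measurable V) (k : ℕ) :
    Integrable (fun ω => increment k (V ω)) μ :=
  .of_bound ((measurable_increment k).comp hV).aestronglyMeasurable (k * k) <|
    ae_of_all _ fun ω => by
      rw [Real.norm_of_nonneg (increment_nonneg _ _)]
      exact increment_le _ _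

end Quickselect

section Probability

variable {Ω : Type*} {mΩ : MeasurableSpace Ω} {μ : Measure Ω}

lemma ProbabilityTheory.iIndepFun.indepFun_head_tail {β : Type*} [MeasurableSpace β]
    {X : ℕ → Ω → β} (hX : iIndepFun X μ) (hm : ∀ i, Measurable (X i)) :
    IndepFun (X 0) (fun ω i => X (i + 1) ω) μ := by
  have h := indep_iSup_of_disjoint (fun i => (hm i).comap_le) ((iIndepFun_iff_iIndep _ _ _).1 hX)
    (S := {0}) (T := Set.Ioi 0) (by simp)
  rw [iSup_singleton] at h
  have htail : Measurable[⨆ j ∈ Set.Ioi 0, MeasurableSpace.comap (X j) ‹_›]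
      fun ω i => X (i + 1) ω :=
    (@measurable_pi_iff _ _ _ (_) _ _).2 fun i => Measurable.of_comap_le
      (le_iSup₂_of_le (f := fun j (_ : j ∈ Set.Ioi 0) => MeasurableSpace.comap (X j) _)
        (i + 1) (Nat.succ_pos i) le_rfl)
  exact (IndepFun_iff_Indep _ _ _).2 (indep_of_indep_of_le_right h htail.comap_le)

lemma ProbabilityTheory.iIndepFun.identDistrib_tail {β : Type*} [MeasurableSpace β]
    {X : ℕ → Ω → β} (hX : iIndepFun X μ) (h : ∀ i, IdentDistrib (X (i + 1)) (X i) μ μ) :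
    IdentDistrib (fun ω i => X (i + 1) ω) (fun ω i => X i ω) μ μ :=
  IdentDistrib.pi h (hX.precomp (add_left_injective 1)) hX

variable {X : Ω → ℝ}

lemma ae_mem_Ico_of_map_eq (hX : Measurable X)
    (h : μ.map X = volume.restrict (Set.Icc 0 1)) : ∀ᵐ ω ∂μ, X ω ∈ Set.Ico (0 : ℝ) 1 := by
  have : ∀ᵐ x ∂(μ.map X), x ∈ Set.Ico (0 : ℝ) 1 := by
    rw [h, ← Measure.restrict_congr_set Ico_ae_eq_Icc]
    exact ae_restrict_mem measurableSet_Ico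
  exact ae_of_ae_map hX.aemeasurable this

lemma integral_indicator_Ico_of_map_eq (hX : Measurable X)
    (h : μ.map X = volume.restrict (Set.Icc 0 1)) {a b : ℝ} (ha : 0 ≤ a) (hab : a ≤ b)
    (hb : b ≤ 1) : ∫ ω, (Set.Ico a b).indicator 1 (X ω) ∂μ = b - a := by
  rw [← integral_map hX.aemeasurable
    ((measurable_one.indicator measurableSet_Ico).aestronglyMeasurable), h,
    integral_indicator_one measurableSet_Ico, measureReal_restrict_apply measurableSet_Ico,
    Set.inter_eq_left.2 (Set.Ico_subset_Icc_self.trans (Set.Icc_subset_Icc ha hb)),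
    Real.volume_real_Ico_of_le hab]

end Probability

namespace Quickselect

section UniformSequence

variable {Ω : Type*} [MeasureSpace Ω] {U : ℕ → Ω → ℝ}

lemma integral_increment_shift (hUmeas : ∀ k, Measurable (U k))
    (hUunif : ∀ k, Measure.map (U k) ℙ = volume.restrict (Set.Icc (0 : ℝ) 1))
    (hindep : iIndepFun U ℙ) (k : ℕ) :
    ∫ ω, increment k (shift (U · ω)) = ∫ ω, increment k (U · ω) :=
  ((hindep.identDistrib_tail fun i =>
      ⟨(hUmeas _).aemeasurable, (hUmeas _).aemeasurable, by rw [hUunif, hUunif]⟩).comp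
    (measurable_increment k)).integral_eq

lemma integral_indicator_mul_increment_shift (hUmeas : ∀ k, Measurable (U k))
    (hUunif : ∀ k, Measure.map (U k) ℙ = volume.restrict (Set.Icc (0 : ℝ) 1))
    (hindep : iIndepFun U ℙ) {n k : ℕ} (hn : 0 < n) (hkn : k ≤ n) :
    ∫ ω, (jumpSet n k).indicator 1 (U 0 ω) * increment k (shift (U · ω))
      = k / ((n + 1) * n) * ∫ ω, increment k (U · ω) := by
  have hφ : Measurable ((jumpSet n k).indicator (1 : ℝ → ℝ)) :=
    measurable_one.indicator measurableSet_Ico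
  have hind := (hindep.indepFun_head_tail hUmeas).comp hφ (measurable_increment k)
  have htail : Measurable fun ω i => U (i + 1) ω := measurable_pi_lambda _ fun i => hUmeas (i + 1)
  have hn' : (0 : ℝ) < n := by exact_mod_cast hn
  have hkn' : (k : ℝ) ≤ n := by exact_mod_cast hkn
  calc _ = (∫ ω, (jumpSet n k).indicator 1 (U 0 ω)) *
          ∫ ω, increment k (shift (U · ω)) :=
        hind.integral_fun_mul_eq_mul_integral (hφ.comp (hUmeas 0)).aestronglyMeasurable
          ((measurable_increment k).comp htail).aestronglyMeasurable
    _ = (k / n - k / (n + 1)) * ∫ ω, increment k (U · ω) := by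
        rw [jumpSet, integral_indicator_Ico_of_map_eq (hUmeas 0) (hUunif 0) (by positivity)
          (div_le_div_of_nonneg_left k.cast_nonneg hn' (by linarith)) ((div_le_one hn').2 hkn'),
          integral_increment_shift hUmeas hUunif hindep k]
    _ = _ := by
        field_simp
        ring

lemma integral_increment_succ [IsProbabilityMeasure (ℙ : Measure Ω)]
    (hUmeas : ∀ k, Measurable (U k))
    (hUunif : ∀ k, Measure.map (U k) ℙ = volume.restrict (Set.Icc (0 : ℝ) 1))
    (hindep : iIndepFun U ℙ) {n : ℕ} (hn : 0 < n) :
    ∫ ω, increment (n + 1) (U · ω) =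
      1 + ∑ k ∈ Finset.Icc 1 n, k / ((n + 1) * n) * ∫ ω, increment k (U · ω) := by
  have htail : Measurable fun ω i => U (i + 1) ω := measurable_pi_lambda _ fun i => hUmeas (i + 1)
  have hterm : ∀ k ∈ Finset.Icc 1 n, Integrable (fun ω =>
      (jumpSet n k).indicator 1 (U 0 ω) * increment k (shift (U · ω))) :=
    fun k _ => (integrable_increment_comp htail k).bdd_mul
      ((measurable_one.indicator measurableSet_Ico).comp (hUmeas 0)).aestronglyMeasurable
      (c := 1) (ae_of_all _ fun ω => by
        by_cases h : U 0 ω ∈ jumpSet n k <;> simp [h])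
  calc ∫ ω, increment (n + 1) (U · ω)
      = ∫ ω, (1 + ∑ k ∈ Finset.Icc 1 n, (jumpSet n k).indicator 1 (U 0 ω) *
          increment k (shift (U · ω))) :=
        integral_congr_ae <| (ae_mem_Ico_of_map_eq (hUmeas 0) (hUunif 0)).mono fun ω hω =>
          increment_succ hn hω.1 hω.2
    _ = 1 + ∑ k ∈ Finset.Icc 1 n, ∫ ω, (jumpSet n k).indicator 1 (U 0 ω) *
          increment k (shift (U · ω)) := by
        rw [integral_add (integrable_const 1) (integrable_finsetSum _ hterm),
          integral_finsetSum _ hterm, integral_const, probReal_univ, one_smul]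
    _ = _ := by
        congr 1
        exact Finset.sum_congr rfl fun k hk =>
          integral_indicator_mul_increment_shift hUmeas hUunif hindep hn (Finset.mem_Icc.1 hk).2

end UniformSequence

lemma sum_Icc_one_natCast (n : ℕ) : ∑ k ∈ Finset.Icc 1 n, (k : ℝ) = n * (n + 1) / 2 := by
  induction n with
  | zero => simp
  | succ n ih =>
    rw [Finset.sum_Icc_succ_top (by omega), ih]
    push_cast
    ring

lemma le_two_mul_of_le_add_weighted_sum {g : ℕ → ℝ} {c : ℝ} (h1 : g 1 ≤ 2 * c)
    (hrec : ∀ p : ℕ, 2 ≤ p →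
      g p ≤ c + 1 / ((p : ℝ) * ((p : ℝ) - 1)) * ∑ k ∈ Finset.Icc 1 (p - 1), (k : ℝ) * g k)
    (p : ℕ) (hp : 1 ≤ p) : g p ≤ 2 * c := by
  induction p using Nat.strong_induction_on with
  | _ p ih =>
    rcases hp.eq_or_lt with rfl | hp2
    · exact h1
    have hsum : ∑ k ∈ Finset.Icc 1 (p - 1), (k : ℝ) * g k ≤
        ∑ k ∈ Finset.Icc 1 (p - 1), (k : ℝ) * (2 * c) :=
      Finset.sum_le_sum fun k hk => by
        rw [Finset.mem_Icc] at hk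
        exact mul_le_mul_of_nonneg_left (ih k (by omega) hk.1) k.cast_nonneg
    rw [← Finset.sum_mul, sum_Icc_one_natCast, Nat.cast_sub (by omega), Nat.cast_one] at hsum
    have hp1 : (1 : ℝ) < p := by exact_mod_cast hp2
    calc g p ≤ c + 1 / ((p : ℝ) * ((p : ℝ) - 1)) * ∑ k ∈ Finset.Icc 1 (p - 1), (k : ℝ) * g k :=
          hrec p hp2
      _ ≤ c + 1 / ((p : ℝ) * ((p : ℝ) - 1)) *
            (((p : ℝ) - 1) * ((p : ℝ) - 1 + 1) / 2 * (2 * c)) := by gcongr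
      _ = 2 * c := by
          have : (p : ℝ) - 1 ≠ 0 := by linarith
          field_simp
          ring

end Quickselect

theorem stmt_19 {Ω : Type*} [MeasureSpace Ω] [IsProbabilityMeasure (ℙ : Measure Ω)]
    (U : ℕ → Ω → ℝ) (hUmeas : ∀ k, Measurable (U k))
    (hUunif : ∀ k, Measure.map (U k) ℙ = volume.restrict (Set.Icc (0:ℝ) 1))
    (hindep : iIndepFun U ℙ)
    (f : ℕ → ℝ)
    (hf : ∀ p, f p = ∫ ω, |(C p (fun k => U k ω) : ℝ) - (C (p - 1) (fun k => U k ω) : ℝ)| ∂ℙ) :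
    (∀ p : ℕ, 2 ≤ p →
      f p ≤ 1 + (1 / ((p : ℝ) * ((p : ℝ) - 1))) * ∑ k ∈ Finset.Icc 1 (p - 1), (k : ℝ) * f k) ∧
    (∀ p, 1 ≤ p → f p ≤ 2) := by
  have hf' : ∀ p, f p = ∫ ω, Quickselect.increment p (U · ω) := fun p => by
    rw [hf p]
    exact integral_congr_ae (ae_of_all _ fun ω => abs_of_nonneg (Quickselect.increment_nonneg p _))
  have hrec : ∀ p : ℕ, 2 ≤ p →
      f p = 1 + 1 / ((p : ℝ) * ((p : ℝ) - 1)) * ∑ k ∈ Finset.Icc 1 (p - 1), (k : ℝ) * f k := by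
    intro p hp
    obtain ⟨n, rfl⟩ : ∃ n, p = n + 1 := ⟨p - 1, by omega⟩
    rw [hf', Quickselect.integral_increment_succ hUmeas hUunif hindep (by omega),
      Nat.add_sub_cancel, Finset.mul_sum]
    push_cast
    congr 1
    refine Finset.sum_congr rfl fun k _ => ?_
    rw [hf']
    ring
  have hf1 : f 1 = 0 := by simp [hf', Quickselect.increment, Quickselect.C_one, Quickselect.C_zero]
  refine ⟨fun p hp => (hrec p hp).le, fun p hp => ?_⟩
  simpa using Quickselect.le_two_mul_of_le_add_weighted_sum (c := 1) (by norm_num [hf1])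
    (fun p hp => (hrec p hp).le) p hp
end
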